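/- The parametrized guarantees Seq(l, F) and Lin(l, F) are incomparable, first direction: there exist a replicated data type F, a level l ∈ {weak, strong} and a history H such that H satisfies Seq(l, F) but does not satisfy Lin(l, F). -/

import Mathlib

set_option autoImplicit false

/-- Consistency levels. -/
inductive Lvl : Type
  | weak
  | strong
  deriving DecidableEq

/-- A history `H = (E, op, rval, rb, ss, lvl)`.  The value `none` of `rval`
plays the role of the distinguished symbol `∇` (a pending operation). -/
structure History (E Op Val : Type) : Type where
  op : E → Op
  rval : E → Option Val
  rb : E → E → Prop
  ss : E → E → Prop
  lvl : E → Lvl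
  countable : Countable E
  rb_irrefl : ∀ a, ¬ rb a a
  rb_trans : ∀ a b c, rb a b → rb b c → rb a c
  rb_finite_preds : ∀ e, {e' | rb e' e}.Finite
  rb_ret : ∀ a b, rb a b → rval a ≠ none
  rb_interval : ∀ a b c d, rb a b → rb c d → rb a d ∨ rb c b
  ss_equiv : Equivalence ss
  ss_rb_total : ∀ a b, ss a b → a ≠ b → rb a b ∨ rb b a

/-- An abstract execution `A = (H, vis, ar, par)`. -/
structure AExec (E Op Val : Type) extends History E Op Val : Type where
  vis : E → E → Prop
  ar : E → E → Prop
  par : E → E → E → Prop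
  vis_acyclic : ∀ e, ¬ Relation.TransGen vis e e
  vis_finite_preds : ∀ e, {e' | vis e' e}.Finite
  ar_irrefl : ∀ a, ¬ ar a a
  ar_trans : ∀ a b c, ar a b → ar b c → ar a c
  ar_total : ∀ a b, a ≠ b → ar a b ∨ ar b a
  par_irrefl : ∀ e a, ¬ par e a a
  par_trans : ∀ e a b c, par e a b → par e b c → par e a c
  par_total : ∀ e a b, a ≠ b → par e a b ∨ par e b a

/-- An operation context `C = (E_C, op, vis, ar)`:
a finite set of events with operations, visibility, and a strict total
arbitration order. -/
structure OpContext (Op : Type) : Type 1 where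
  carrier : Type
  finite : Finite carrier
  op : carrier → Op
  vis : carrier → carrier → Prop
  ar : carrier → carrier → Prop
  ar_irrefl : ∀ a, ¬ ar a a
  ar_trans : ∀ a b c, ar a b → ar b c → ar a c
  ar_total : ∀ a b, a ≠ b → ar a b ∨ ar b a

namespace OpContext

variable {Op : Type}

/-- Isomorphism of operation contexts. -/
structure Iso (C C' : OpContext Op) where
  toEquiv : C.carrier ≃ C'.carrier
  map_op : ∀ x, C'.op (toEquiv x) = C.op x
  map_vis : ∀ x y, C.vis x y ↔ C'.vis (toEquiv x) (toEquiv y)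
  map_ar : ∀ x y, C.ar x y ↔ C'.ar (toEquiv x) (toEquiv y)

/-- The restriction of a context to a subset of its events. -/
def restrict (C : OpContext Op) (S : Set C.carrier) : OpContext Op where
  carrier := {x : C.carrier // x ∈ S}
  finite := by haveI := C.finite; exact Subtype.finite
  op := fun x => C.op x.1
  vis := fun x y => C.vis x.1 y.1
  ar := fun x y => C.ar x.1 y.1
  ar_irrefl := fun a => C.ar_irrefl a.1
  ar_trans := fun a b c hab hbc => C.ar_trans a.1 b.1 c.1 hab hbc
  ar_total := fun a b h => C.ar_total a.1 b.1 (fun hh => h (Subtype.ext hh))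

/-- The events of a context, listed in ascending arbitration order. -/
noncomputable def sortedEvents (C : OpContext Op) : List C.carrier := by
  haveI := C.finite
  letI : Fintype C.carrier := Fintype.ofFinite _
  letI le : C.carrier → C.carrier → Prop := fun a b => a = b ∨ C.ar a b
  haveI : DecidableRel le := Classical.decRel _
  haveI : IsTrans C.carrier le := ⟨by
    rintro a b c (rfl | hab) (rfl | hbc)
    · exact Or.inl rfl
    · exact Or.inr hbc
    · exact Or.inr hab
    · exact Or.inr (C.ar_trans _ _ _ hab hbc)⟩
  haveI : IsAntisymm C.carrier le := ⟨by
    rintro a b (rfl | hab) (h | hba)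
    · rfl
    · rfl
    · exact h.symm
    · exact absurd (C.ar_trans _ _ _ hab hba) (C.ar_irrefl a)⟩
  haveI : IsTotal C.carrier le := ⟨by
    intro a b
    by_cases h : a = b
    · exact Or.inl (Or.inl h)
    · rcases C.ar_total a b h with h' | h'
      · exact Or.inl (Or.inr h')
      · exact Or.inr (Or.inr h')⟩
  exact Finset.univ.sort le

end OpContext

/-- `rank B rel x` is the number of `y ∈ B` with `rel y x`. -/
noncomputable def rank {E : Type} (B : Set E) (r : E → E → Prop) (x : E) : ℕ :=
  {y ∈ B | r y x}.ncard

namespace AExec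

variable {E Op Val : Type}

/-- Session order `so := rb ∩ ss`. -/
def so (A : AExec E Op Val) (a b : E) : Prop := A.rb a b ∧ A.ss a b

/-- Happens-before `hb := (so ∪ vis)⁺`. -/
def hb (A : AExec E Op Val) : E → E → Prop :=
  Relation.TransGen (fun a b => A.so a b ∨ A.vis a b)

/-- The set `vis⁻¹(e)` of visibility predecessors of `e`. -/
def visPreds (A : AExec E Op Val) (e : E) : Set E := {x | A.vis x e}

/-- The operation context of an event: its visibility predecessors together
with the final arbitration order. -/
def context (A : AExec E Op Val) (e : E) : OpContext Op where
  carrier := {x : E // A.vis x e}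
  finite := (A.vis_finite_preds e).to_subtype
  op := fun x => A.op x.1
  vis := fun x y => A.vis x.1 y.1
  ar := fun x y => A.ar x.1 y.1
  ar_irrefl := fun a => A.ar_irrefl a.1
  ar_trans := fun a b c h1 h2 => A.ar_trans a.1 b.1 c.1 h1 h2
  ar_total := fun a b h => A.ar_total a.1 b.1 (fun hh => h (Subtype.ext hh))

/-- The fluctuating operation context of an event: its visibility predecessors
together with the arbitration order `par e` as perceived by `e`. -/
def fcontext (A : AExec E Op Val) (e : E) : OpContext Op where
  carrier := {x : E // A.vis x e}
  finite := (A.vis_finite_preds e).to_subtype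
  op := fun x => A.op x.1
  vis := fun x y => A.vis x.1 y.1
  ar := fun x y => A.par e x.1 y.1
  ar_irrefl := fun a => A.par_irrefl e a.1
  ar_trans := fun a b c h1 h2 => A.par_trans e a.1 b.1 c.1 h1 h2
  ar_total := fun a b h => A.par_total e a.1 b.1 (fun hh => h (Subtype.ext hh))

/-- Eventual visibility. -/
def EV (A : AExec E Op Val) : Prop :=
  ∀ e, {e' | A.rb e e' ∧ ¬ A.vis e e'}.Finite

/-- No circular causality: `hb` is acyclic. -/
def NCC (A : AExec E Op Val) : Prop := ∀ e, ¬ A.hb e e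

/-- Return value consistency. -/
def RVal (F : Op → OpContext Op → Val) (A : AExec E Op Val) : Prop :=
  ∀ e, A.rval e = some (F (A.op e) (A.context e))

/-- Fluctuating return value consistency. -/
def FRVal (F : Op → OpContext Op → Val) (A : AExec E Op Val) : Prop :=
  ∀ e, A.rval e = some (F (A.op e) (A.fcontext e))

/-- Convergent perceived arbitration. -/
def CPar (A : AExec E Op Val) : Prop :=
  ∀ e, {e' | A.vis e e' ∧
    rank (A.visPreds e') (A.par e') e ≠ rank (A.visPreds e') A.ar e}.Finite

/-- Basic eventual consistency. -/
def BEC (F : Op → OpContext Op → Val) (A : AExec E Op Val) : Prop :=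
  A.EV ∧ A.NCC ∧ A.RVal F

/-- Fluctuating eventual consistency. -/
def FEC (F : Op → OpContext Op → Val) (A : AExec E Op Val) : Prop :=
  A.EV ∧ A.NCC ∧ A.FRVal F ∧ A.CPar

/-- Single order (unparametrized): `vis = ar \ (E' × E)` for some set `E'`
of pending events. -/
def SinOrd (A : AExec E Op Val) : Prop :=
  ∃ E' : Set E, (∀ x ∈ E', A.rval x = none) ∧
    ∀ x y, A.vis x y ↔ (A.ar x y ∧ x ∉ E')

/-- Parametrized eventual visibility. -/
def EVL (A : AExec E Op Val) (l : Lvl) : Prop :=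
  ∀ e, {e' | A.lvl e' = l ∧ A.rb e e' ∧ ¬ A.vis e e'}.Finite

/-- Parametrized no circular causality: `hb ∩ (L × L)` is acyclic. -/
def NCCL (A : AExec E Op Val) (l : Lvl) : Prop :=
  ∀ e, ¬ Relation.TransGen (fun a b => A.hb a b ∧ A.lvl a = l ∧ A.lvl b = l) e e

/-- Parametrized return value consistency. -/
def RValL (F : Op → OpContext Op → Val) (A : AExec E Op Val) (l : Lvl) : Prop :=
  ∀ e, A.lvl e = l → A.rval e = some (F (A.op e) (A.context e))

/-- Parametrized fluctuating return value consistency. -/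
def FRValL (F : Op → OpContext Op → Val) (A : AExec E Op Val) (l : Lvl) : Prop :=
  ∀ e, A.lvl e = l → A.rval e = some (F (A.op e) (A.fcontext e))

/-- Parametrized convergent perceived arbitration. -/
def CParL (A : AExec E Op Val) (l : Lvl) : Prop :=
  ∀ e, {e' | A.lvl e' = l ∧ A.vis e e' ∧
    rank (A.visPreds e') (A.par e') e ≠ rank (A.visPreds e') A.ar e}.Finite

/-- Parametrized basic eventual consistency `BEC(l, F)`. -/
def BECL (F : Op → OpContext Op → Val) (A : AExec E Op Val) (l : Lvl) : Prop :=
  A.EVL l ∧ A.NCCL l ∧ A.RValL F l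

/-- Parametrized fluctuating eventual consistency `FEC(l, F)`. -/
def FECL (F : Op → OpContext Op → Val) (A : AExec E Op Val) (l : Lvl) : Prop :=
  A.EVL l ∧ A.NCCL l ∧ A.FRValL F l ∧ A.CParL l

/-- Parametrized single order `SinOrd(l)`:
`vis ∩ (E × L) = (ar ∩ (E × L)) \ (E' × E)` for some set `E'` of pending
events. -/
def SinOrdL (A : AExec E Op Val) (l : Lvl) : Prop :=
  ∃ E' : Set E, (∀ x ∈ E', A.rval x = none) ∧
    ∀ x y, A.lvl y = l → (A.vis x y ↔ (A.ar x y ∧ x ∉ E'))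

/-- Parametrized session arbitration `SessArb(l)`: `so ∩ (E × L) ⊆ ar`. -/
def SessArbL (A : AExec E Op Val) (l : Lvl) : Prop :=
  ∀ x y, A.so x y → A.lvl y = l → A.ar x y

/-- Parametrized real-time order `RT(l)`: `rb ∩ (L × L) ⊆ ar`. -/
def RTL (A : AExec E Op Val) (l : Lvl) : Prop :=
  ∀ x y, A.lvl x = l → A.lvl y = l → A.rb x y → A.ar x y

/-- Parametrized sequential consistency `Seq(l, F)`. -/
def SeqL (F : Op → OpContext Op → Val) (A : AExec E Op Val) (l : Lvl) : Prop :=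
  A.SinOrdL l ∧ A.SessArbL l ∧ A.BECL F l

/-- Parametrized linearizability `Lin(l, F)`. -/
def LinL (F : Op → OpContext Op → Val) (A : AExec E Op Val) (l : Lvl) : Prop :=
  A.SinOrdL l ∧ A.RTL l ∧ A.BECL F l

end AExec

/-- A history satisfies a consistency guarantee `P` iff it can be extended by
`vis`, `ar`, `par` to an abstract execution satisfying `P`. -/
def History.sat {E Op Val : Type} (H : History E Op Val)
    (P : AExec E Op Val → Prop) : Prop :=
  ∃ A : AExec E Op Val, A.toHistory = H ∧ P A

/-- A replicated data type: a return value for every operation and every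
operation context, invariant under isomorphism of contexts. -/
structure RDT (Op Val : Type) : Type 1 where
  F : Op → OpContext Op → Val
  iso_inv : ∀ (o : Op) (C C' : OpContext Op), Nonempty (C.Iso C') → F o C = F o C'

/-- An operation is read-only for `F` iff removing any event performing it
from any context does not change the value of any operation. -/
def isReadOnly {Op Val : Type} (F : Op → OpContext Op → Val) (o : Op) : Prop :=
  ∀ (o' : Op) (C : OpContext Op) (e : C.carrier), C.op e = o →
    F o' C = F o' (C.restrict {x | x ≠ e})

/-! ### The append-only sequence data type `F_seq` -/

/-- The 26-letter alphabet `{a, …, z}`. -/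
abbrev Letter : Type := Fin 26

/-- Words over the alphabet. -/
abbrev Word : Type := List Letter

/-- Operations of the append-only sequence data type. -/
inductive SeqOp : Type
  | append (s : Word)
  | read

/-- Return values of the append-only sequence data type. -/
inductive SeqVal : Type
  | ok
  | word (w : Word)

/-- The word returned by `read`: the concatenation, in ascending arbitration
order, of the words appended by the append events of the context. -/
noncomputable def seqReadWord (C : OpContext SeqOp) : Word :=
  (C.sortedEvents.map C.op).foldr
    (fun o w => match o with
      | SeqOp.append s => s ++ w
      | SeqOp.read => w) []

/-- The append-only sequence replicated data type `F_seq`. -/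
noncomputable def Fseq : SeqOp → OpContext SeqOp → SeqVal
  | SeqOp.append _, _ => SeqVal.ok
  | SeqOp.read, C => SeqVal.word (seqReadWord C)

/-! ### The non-negative counter data type `F_NNC` -/

/-- Operations of the non-negative counter. -/
inductive NNCOp : Type
  | add (v : ℕ)
  | subtract (v : ℕ)
  | get

/-- Return values of the non-negative counter. -/
inductive NNCVal : Type
  | ok
  | bool (b : Bool)
  | int (n : ℤ)

/-- One step of the fold computing the counter value. -/
def fNNC (x : ℤ) : NNCOp → ℤ
  | NNCOp.add v => x + v
  | NNCOp.subtract v => if (v : ℤ) ≤ x then x - v else x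
  | NNCOp.get => x

/-- The value of the counter in a context: fold `fNNC` starting from `0`
over the operations of the context taken in ascending arbitration order. -/
noncomputable def nncVal (C : OpContext NNCOp) : ℤ :=
  (C.sortedEvents.map C.op).foldl fNNC 0

/-- The non-negative counter replicated data type `F_NNC`. -/
noncomputable def Fnnc : NNCOp → OpContext NNCOp → NNCVal
  | NNCOp.add _, _ => NNCVal.ok
  | NNCOp.subtract v, C => NNCVal.bool (decide ((v : ℤ) ≤ nncVal C))
  | NNCOp.get, C => NNCVal.int (nncVal C)

/-!
Sequential consistency only forces arbitration to extend the session order, whereas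
linearizability forces it to extend the real-time order. Take two events in different
sessions: an append of the word `a`, which returns before a read that returns the empty
word. Arbitrating (and showing) the read before the append makes every return value
correct, so the history is sequentially consistent. Under linearizability the append must
be arbitrated before the read, hence be visible to it, and the read would return `a`.
-/

namespace OpContext

variable {Op : Type}

theorem mem_sortedEvents (C : OpContext Op) (x : C.carrier) : x ∈ C.sortedEvents := by
  unfold sortedEvents
  simp only [Finset.mem_sort, Finset.mem_univ]

theorem pairwise_ar_sortedEvents (C : OpContext Op) : C.sortedEvents.Pairwise C.ar := by
  have hle : C.sortedEvents.Pairwise (fun a b => a = b ∨ C.ar a b) := by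
    unfold sortedEvents
    refine @Finset.pairwise_sort _ _ _ ?_ ?_ ?_ ?_
  have hnodup : C.sortedEvents.Nodup := by
    unfold sortedEvents
    refine @Finset.sort_nodup _ _ _ ?_ ?_ ?_ ?_
  exact (hle.and hnodup).imp fun ⟨hab, hne⟩ => hab.resolve_left hne

theorem Iso.map_sortedEvents {C C' : OpContext Op} (i : C.Iso C') :
    C.sortedEvents.map i.toEquiv = C'.sortedEvents := by
  have hmap : (C.sortedEvents.map i.toEquiv).Pairwise C'.ar :=
    List.pairwise_map.mpr (C.pairwise_ar_sortedEvents.imp (i.map_ar _ _).mp)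
  refine List.Perm.eq_of_pairwise
    (fun a b _ _ hab hba => absurd (C'.ar_trans _ _ _ hab hba) (C'.ar_irrefl a))
    hmap C'.pairwise_ar_sortedEvents ?_
  have nodup_of_pairwise {l : List C'.carrier} (h : l.Pairwise C'.ar) : l.Nodup :=
    List.Pairwise.imp (S := (· ≠ ·)) (fun hab heq => C'.ar_irrefl _ (heq ▸ hab)) h
  refine (List.perm_ext_iff_of_nodup (nodup_of_pairwise hmap)
    (nodup_of_pairwise C'.pairwise_ar_sortedEvents)).mpr fun x => ?_
  simp only [List.mem_map, mem_sortedEvents, true_and, iff_true]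
  exact ⟨i.toEquiv.symm x, i.toEquiv.apply_symm_apply x⟩

theorem Iso.map_op_sortedEvents {C C' : OpContext Op} (i : C.Iso C') :
    C.sortedEvents.map C.op = C'.sortedEvents.map C'.op := by
  rw [← i.map_sortedEvents, List.map_map]
  exact List.map_congr_left fun x _ => (i.map_op x).symm

end OpContext

def SeqOp.appended : SeqOp → Word
  | .append s => s
  | .read => []

section SeqReadWord

variable {C C' : OpContext SeqOp}

theorem seqReadWord_eq_flatMap (C : OpContext SeqOp) :
    seqReadWord C = (C.sortedEvents.map C.op).flatMap SeqOp.appended := by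
  unfold seqReadWord
  induction C.sortedEvents.map C.op with
  | nil => rfl
  | cons o _ ih => cases o <;> simp only [List.foldr_cons, List.flatMap_cons, ih, SeqOp.appended,
      List.nil_append]

theorem seqReadWord_eq_nil_iff :
    seqReadWord C = [] ↔ ∀ e : C.carrier, (C.op e).appended = [] := by
  simp only [seqReadWord_eq_flatMap, List.flatMap_eq_nil_iff, List.mem_map,
    C.mem_sortedEvents, true_and, forall_exists_index, forall_apply_eq_imp_iff]

theorem seqReadWord_congr (i : C.Iso C') : seqReadWord C = seqReadWord C' := by
  unfold seqReadWord
  rw [i.map_op_sortedEvents]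

end SeqReadWord

noncomputable def seqRDT : RDT SeqOp SeqVal where
  F := Fseq
  iso_inv
    | .append _, _, _, _ => rfl
    | .read, _, _, ⟨i⟩ => congrArg SeqVal.word (seqReadWord_congr i)

namespace AExec

variable {E Op Val : Type} {A : AExec E Op Val} {l : Lvl}

theorem vis_of_rb (hS : A.SinOrdL l) (hRT : A.RTL l) {a b : E} (ha : A.lvl a = l)
    (hb : A.lvl b = l) (hab : A.rb a b) : A.vis a b := by
  obtain ⟨E', hpending, hvis⟩ := hS
  exact (hvis a b hb).mpr ⟨hRT a b ha hb hab, fun h => A.rb_ret a b hab (hpending a h)⟩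

theorem hb_le_ar (h : ∀ a b, A.so a b ∨ A.vis a b → A.ar a b) : A.hb ≤ A.ar :=
  have : IsTrans E A.ar := ⟨A.ar_trans⟩
  Relation.transGen_minimal h

theorem nccl_of_hb_le_ar (h : A.hb ≤ A.ar) : A.NCCL l :=
  have : IsTrans E A.ar := ⟨A.ar_trans⟩
  fun e he => A.ar_irrefl e (Relation.transGen_minimal (fun a b hab => h a b hab.1) e e he)

end AExec

section Chain

variable {n : ℕ} {Op Val : Type}

def History.chain (op : Fin n → Op) (rval : Fin n → Val) (l : Lvl) :
    History (Fin n) Op Val where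
  op := op
  rval := fun e => some (rval e)
  rb := (· < ·)
  ss := Eq
  lvl := fun _ => l
  countable := inferInstance
  rb_irrefl := lt_irrefl
  rb_trans _ _ _ := lt_trans
  rb_finite_preds _ := Set.toFinite _
  rb_ret _ _ _ := Option.some_ne_none _
  rb_interval a b c d hab hcd := by
    by_contra! h
    exact lt_irrefl c ((hcd.trans_le h.1).trans (hab.trans_le h.2))
  ss_equiv := eq_equivalence
  ss_rb_total _ _ hab hne := absurd hab hne

def AExec.reverseChain (op : Fin n → Op) (rval : Fin n → Val) (l : Lvl) :
    AExec (Fin n) Op Val where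
  toHistory := History.chain op rval l
  vis := (· > ·)
  ar := (· > ·)
  par _ := (· > ·)
  vis_acyclic e he := lt_irrefl e (by rwa [Relation.transGen_eq_self] at he)
  vis_finite_preds _ := Set.toFinite _
  ar_irrefl := lt_irrefl
  ar_trans _ _ _ hab hbc := hbc.trans hab
  ar_total _ _ hne := hne.lt_or_gt.symm
  par_irrefl _ := lt_irrefl
  par_trans _ _ _ _ hab hbc := hbc.trans hab
  par_total _ _ _ hne := hne.lt_or_gt.symm

theorem AExec.seqL_reverseChain {F : Op → OpContext Op → Val} {op : Fin n → Op}
    {rval : Fin n → Val} {l : Lvl} (hF : (reverseChain op rval l).RValL F l) :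
    (reverseChain op rval l).SeqL F l := by
  have not_so (a b : Fin n) : ¬ (reverseChain op rval l).so a b := by
    rintro ⟨hab, rfl⟩
    exact lt_irrefl a hab
  refine ⟨⟨∅, fun _ => False.elim, fun _ _ _ => (and_iff_left (Set.notMem_empty _)).symm⟩,
    fun a b hab => (not_so a b hab).elim, fun _ => Set.toFinite _, ?_, hF⟩
  exact nccl_of_hb_le_ar (hb_le_ar fun a b => Or.rec (fun hab => (not_so a b hab).elim) id)

end Chain

/-- `Seq(l, F)` and `Lin(l, F)` are incomparable, first
direction: some history satisfies `Seq(l, F)` but not `Lin(l, F)`. -/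
theorem seq_not_implies_lin :
    ∃ (Op Val : Type) (F : RDT Op Val) (l : Lvl) (E : Type)
      (H : History E Op Val),
      H.sat (fun A => A.SeqL F.F l) ∧ ¬ H.sat (fun A => A.LinL F.F l) := by
  let op : Fin 2 → SeqOp := ![.append [0], .read]
  let rval : Fin 2 → SeqVal := ![.ok, .word []]
  refine ⟨SeqOp, SeqVal, seqRDT, .strong, Fin 2, History.chain op rval .strong,
    ⟨AExec.reverseChain op rval .strong, rfl, AExec.seqL_reverseChain ?_⟩, ?_⟩
  · intro e _
    fin_cases e
    · rfl
    · refine congrArg (some ∘ SeqVal.word) (seqReadWord_eq_nil_iff.mpr ?_).symm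
      rintro ⟨x, hx⟩
      exact absurd (show 1 < x from hx) (by omega)
  · rintro ⟨A, hA, hSinOrd, hRT, -, -, hRVal⟩
    have hlvl (e : Fin 2) : A.lvl e = .strong := by rw [hA]; rfl
    have hop : A.op = op := by rw [hA]; rfl
    have hvis : A.vis 0 1 :=
      A.vis_of_rb hSinOrd hRT (hlvl 0) (hlvl 1) (by rw [hA]; exact Fin.zero_lt_one)
    have hread : seqReadWord (A.context 1) = [] := by
      have h := hRVal 1 (hlvl 1)
      rw [show A.rval 1 = some (.word []) by rw [hA]; rfl, hop] at h
      exact (SeqVal.word.inj (Option.some.inj h)).symm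
    have hnil : (A.op 0).appended = [] := seqReadWord_eq_nil_iff.mp hread ⟨0, hvis⟩
    rw [hop] at hnil
    exact List.cons_ne_nil _ _ hnil
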